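/- arXiv:1308.2340 — 2 statements merged into one kernel-verified Lean document; each statement's English description precedes it below -/
import Mathlib

section
/- Suppose α, β, γ ∈ F, α is built from β, and β is built from γ. If α is built simply from γ, then β is built simply from γ and α is built simply from β. -/
open Filter Topology
open scoped ENNReal Classical

abbrev Word := List Bool

/-- Number of 1s (`true`) in a word. -/
def Yc (w : Word) : ℕ := w.count true
/-- Number of 0s (`false`) in a word. -/
def Zc (w : Word) : ℕ := w.count false
/-- Length of a word. -/
def lh (w : Word) : ℕ := w.length
/-- The ratio ρ_w = Y(w)/Z(w). -/
noncomputable def rho (w : Word) : ℝ := (Yc w : ℝ) / (Zc w : ℝ)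
/-- The ratio ρ_w as an extended nonnegative real. -/
noncomputable def rhoE (w : Word) : ℝ≥0∞ := (Yc w : ℝ≥0∞) / (Zc w : ℝ≥0∞)

/-- w is a finite binary word starting and ending with 0. -/
def inF (w : Word) : Prop := w.head? = some false ∧ w.getLast? = some false

/-- The word v 1^{a_1} v ⋯ v 1^{a_{q-1}} v, where a = [a_1, …, a_{q-1}]. -/
def buildW (v : Word) (a : List ℕ) : Word :=
  v ++ (a.map fun t => List.replicate t true ++ v).flatten

/-- u is built from v. -/
def BuiltFrom (u v : Word) : Prop := ∃ a : List ℕ, a ≠ [] ∧ u = buildW v a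

/-- u is built simply from v. -/
def BuiltSimplyFrom (u v : Word) : Prop :=
  ∃ a : List ℕ, a ≠ [] ∧ (∀ x ∈ a, ∀ y ∈ a, x = y) ∧ u = buildW v a

/-- The infinite word V extends the finite word w (w is a prefix of V). -/
def Extends (V : ℕ → Bool) (w : Word) : Prop :=
  ∀ (i : ℕ) (h : i < w.length), w.get ⟨i, h⟩ = V i

/-- The infinite word V is built from the finite word v. -/
def InfBuiltFrom (V : ℕ → Bool) (v : Word) : Prop :=
  ∃ a : ℕ → ℕ, ∀ n : ℕ, Extends V (buildW v (List.ofFn fun i : Fin n => a i))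

/-- A generating sequence: v_0 = 0 and each v_{n+1} is built from v_n. -/
def GenSeq (v : ℕ → Word) : Prop :=
  v 0 = [false] ∧ ∀ n, BuiltFrom (v (n + 1)) (v n)

/-- A generating sequence for the infinite word V. -/
def GenSeqFor (V : ℕ → Bool) (v : ℕ → Word) : Prop :=
  GenSeq v ∧ ∀ n, InfBuiltFrom V (v n)

/-- V is aperiodic. -/
def Aperiodic (V : ℕ → Bool) : Prop := ¬ ∃ p > 0, ∀ i, V (i + p) = V i

/-- V is a nondegenerate infinite rank one word (element of R). -/
def RankOneWord (V : ℕ → Bool) : Prop := (∃ v, GenSeqFor V v) ∧ Aperiodic V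

/-- v is an element of the canonical generating sequence of V. -/
def CanonicalElt (V : ℕ → Bool) (v : Word) : Prop :=
  InfBuiltFrom V v ∧
    ¬ ∃ u w : Word, inF u ∧ inF w ∧ lh u < lh v ∧ lh v < lh w ∧
      InfBuiltFrom V u ∧ InfBuiltFrom V w ∧
      BuiltFrom w u ∧ BuiltFrom u v ∧ BuiltSimplyFrom w u

/-- (v_n) is the canonical generating sequence of V. -/
def CanonicalGenSeq (V : ℕ → Bool) (v : ℕ → Word) : Prop :=
  GenSeqFor V v ∧ (∀ n, CanonicalElt V (v n)) ∧
    ∀ w : Word, CanonicalElt V w → ∃ n, v n = w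

/-- The canonical generating sequence of V (via choice). -/
noncomputable def canonSeq (V : ℕ → Bool) : ℕ → Word :=
  if h : ∃ v, CanonicalGenSeq V v then h.choose else fun _ => []

/-- ρ_{V,n}, the ratio of the n-th canonical generating word of V. -/
noncomputable def rhoSeq (V : ℕ → Bool) (n : ℕ) : ℝ := rho (canonSeq V n)

/-- ρ_V = lim_n ρ_{V,n} ∈ [0,∞]. -/
noncomputable def rhoV (V : ℕ → Bool) : ℝ≥0∞ := ⨆ n, rhoE (canonSeq V n)

/-- The set O(N,r). -/
def Oset (N : ℕ) (r : ℚ) : Set (ℕ → Bool) :=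
  {V | RankOneWord V ∧ ∀ m n : ℕ, N ≤ m → N ≤ n → |rhoSeq V m - rhoSeq V n| ≤ (r : ℝ)}

/-- R* = {V ∈ R : ρ_V < ∞}. -/
def Rstar : Set (ℕ → Bool) := {V | RankOneWord V ∧ rhoV V < ⊤}

/-- Lengths of common elements of the canonical generating sequences of V and W. -/
def commonLens (V W : ℕ → Bool) : Set ℕ :=
  {n | ∃ w : Word, lh w = n ∧ CanonicalElt V w ∧ CanonicalElt W w}

/-- The ultrametric d on R. -/
noncomputable def dR (V W : ℕ → Bool) : ℝ :=
  if V = W then 0 else (2 : ℝ) ^ (-((sSup (commonLens V W) : ℕ) : ℤ))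

/-- L(α,β) = (total number of spacers)/lh(α), when α is built from β;
here the total spacer count is Y(α) − q·Y(β) with q = Z(α)/Z(β). -/
noncomputable def Lfin (α β : Word) : ℝ :=
  ((Yc α : ℝ) - ((Zc α : ℝ) / (Zc β : ℝ)) * (Yc β : ℝ)) / (lh α : ℝ)

/-- The metric topology τ_d on R, generated by the d-balls. -/
def tauD : TopologicalSpace {V : ℕ → Bool // RankOneWord V} :=
  TopologicalSpace.generateFrom
    {s | ∃ (V : {V : ℕ → Bool // RankOneWord V}) (ε : ℝ), 0 < ε ∧
      s = {W : {V : ℕ → Bool // RankOneWord V} | dR V.1 W.1 < ε}}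

/-- The topology τ* on R*, generated by the d-balls together with the sets O(N,r). -/
def tauStar : TopologicalSpace ↥Rstar :=
  TopologicalSpace.generateFrom
    ({s | ∃ (V : ↥Rstar) (ε : ℝ), 0 < ε ∧ s = {W : ↥Rstar | dR V.1 W.1 < ε}} ∪
     {s | ∃ (N : ℕ) (r : ℚ), 0 < r ∧ s = {W : ↥Rstar | W.1 ∈ Oset N r}})

/-! Since `γ` starts with `0`, the spacer list of a word built from `γ` can be read off the word:
each block `1^{a_i}` ends where the next copy of `γ` begins. If `β = buildW γ c` and
`α = buildW β b`, then `α = buildW γ (c ++ b₁ :: c ++ ⋯ ++ b_{p-1} :: c)`, so the spacer list of `α`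
over `γ` contains every entry of `c` and of `b`; if it is constant, so are `c` and `b`. -/

lemma buildW_cons (v : Word) (x : ℕ) (a : List ℕ) :
    buildW v (x :: a) = v ++ (List.replicate x true ++ buildW v a) := by
  simp [buildW]

lemma buildW_append_cons (v : Word) (a : List ℕ) (t : ℕ) (b : List ℕ) :
    buildW v (a ++ t :: b) = buildW v a ++ (List.replicate t true ++ buildW v b) := by
  simp [buildW]

lemma exists_buildW_eq_false_cons {v : Word} (hv : v.head? = some false) (a : List ℕ) :
    ∃ r, buildW v a = false :: r := by
  obtain ⟨r, rfl⟩ : ∃ r, v = false :: r := List.head?_eq_some_iff.mp hv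
  exact ⟨_, rfl⟩

lemma replicate_true_append_false_cons_inj {x y : ℕ} {s t : Word}
    (h : List.replicate x true ++ false :: s = List.replicate y true ++ false :: t) :
    x = y ∧ s = t := by
  induction x generalizing y with
  | zero => cases y <;> simp_all [List.replicate_succ]
  | succ x ih =>
    cases y with
    | zero => simp [List.replicate_succ] at h
    | succ y =>
      simp only [List.replicate_succ, List.cons_append, List.cons.injEq, true_and] at h
      exact ⟨congrArg _ (ih h).1, (ih h).2⟩

theorem buildW_injective {v : Word} (hv : v.head? = some false) :
    Function.Injective (buildW v) := by
  intro a a' h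
  induction a generalizing a' with
  | nil =>
    cases a' with
    | nil => rfl
    | cons y a' =>
      obtain ⟨r, hr⟩ := exists_buildW_eq_false_cons hv a'
      rw [buildW_cons, hr] at h
      simpa [buildW] using congrArg List.length h
  | cons x a ih =>
    cases a' with
    | nil =>
      obtain ⟨r, hr⟩ := exists_buildW_eq_false_cons hv a
      rw [buildW_cons, hr] at h
      simpa [buildW] using congrArg List.length h
    | cons y a' =>
      obtain ⟨r, hr⟩ := exists_buildW_eq_false_cons hv a
      obtain ⟨r', hr'⟩ := exists_buildW_eq_false_cons hv a'
      rw [buildW_cons, buildW_cons, hr, hr'] at h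
      obtain ⟨rfl, rfl⟩ := replicate_true_append_false_cons_inj (List.append_cancel_left h)
      rw [ih (hr.trans hr'.symm)]

def composeSpacers (c b : List ℕ) : List ℕ := c ++ (b.map fun t => t :: c).flatten

lemma buildW_buildW (γ : Word) (c b : List ℕ) :
    buildW (buildW γ c) b = buildW γ (composeSpacers c b) := by
  induction b with
  | nil => simp [buildW, composeSpacers]
  | cons t b ih =>
    have : composeSpacers c (t :: b) = c ++ t :: composeSpacers c b := by simp [composeSpacers]
    rw [buildW_cons, ih, this, buildW_append_cons]

lemma subset_composeSpacers_left (c b : List ℕ) : c ⊆ composeSpacers c b :=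
  List.subset_append_left _ _

lemma subset_composeSpacers_right (c b : List ℕ) : b ⊆ composeSpacers c b := fun x hx => by
  simp only [composeSpacers, List.mem_append, List.mem_flatten, List.mem_map]
  exact Or.inr ⟨x :: c, ⟨x, hx, rfl⟩, List.mem_cons_self⟩

theorem stmt3_general (alpha beta gamma : Word)
    (hgamma : inF gamma) (h1 : BuiltFrom alpha beta) (h2 : BuiltFrom beta gamma)
    (h3 : BuiltSimplyFrom alpha gamma) :
    BuiltSimplyFrom beta gamma ∧ BuiltSimplyFrom alpha beta := by
  obtain ⟨b, hb, rfl⟩ := h1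
  obtain ⟨c, hc, rfl⟩ := h2
  obtain ⟨a, -, hconst, hbuild⟩ := h3
  have ha : a = composeSpacers c b := buildW_injective hgamma.1 (by rw [← hbuild, buildW_buildW])
  have const_of_subset {l : List ℕ} (hl : l ⊆ a) : ∀ x ∈ l, ∀ y ∈ l, x = y :=
    fun x hx y hy => hconst x (hl hx) y (hl hy)
  exact ⟨⟨c, hc, const_of_subset (ha ▸ subset_composeSpacers_left c b), rfl⟩,
    ⟨b, hb, const_of_subset (ha ▸ subset_composeSpacers_right c b), rfl⟩⟩

theorem stmt3 (alpha beta gamma : Word) (halpha : inF alpha) (hbeta : inF beta)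
    (hgamma : inF gamma) (h1 : BuiltFrom alpha beta) (h2 : BuiltFrom beta gamma)
    (h3 : BuiltSimplyFrom alpha gamma) :
    BuiltSimplyFrom beta gamma ∧ BuiltSimplyFrom alpha beta :=
  stmt3_general alpha beta gamma hgamma h1 h2 h3
end

section
/- Let u ∈ F be fixed and for m with lh(v_m) ≥ 4·lh(u) define c_m = Z(v_m)/(⌊lh(v_m)/lh(u)⌋ − 1), where (v_m) is a generating sequence. Then the sequence (c_m) is nonincreasing. -/
open Filter Topology
open scoped ENNReal Classical

open scoped ENNReal Classical

/-
Passing from `v_m` to `v_{m+1}` multiplies the number of zeros by the cutting parameter `q`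
and the length by at least `q`. With `L = lh u`, the inequality `q * ⌊n / L⌋ ≤ ⌊q * n / L⌋`
shows that the denominator `⌊lh v_m / L⌋ - 1` also grows by a factor of at least `q`,
so `c_m` cannot increase.
-/

lemma Zc_buildW (v : Word) (a : List ℕ) : Zc (buildW v a) = (a.length + 1) * Zc v := by
  induction a with
  | nil => simp [Zc, buildW]
  | cons t a ih =>
    simp [Zc, buildW, List.count_append, List.count_replicate] at ih ⊢
    linarith

lemma length_succ_mul_lh_le_lh_buildW (v : Word) (a : List ℕ) :
    (a.length + 1) * lh v ≤ lh (buildW v a) := by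
  induction a with
  | nil => simp [lh, buildW]
  | cons t a ih =>
    simp [lh, buildW] at ih ⊢
    nlinarith

lemma BuiltFrom.exists_Zc_eq_mul {w v : Word} (hw : BuiltFrom w v) :
    ∃ q, Zc w = q * Zc v ∧ q * lh v ≤ lh w := by
  obtain ⟨a, -, rfl⟩ := hw
  exact ⟨a.length + 1, Zc_buildW v a, length_succ_mul_lh_le_lh_buildW v a⟩

lemma inF.lh_pos {w : Word} (hw : inF w) : 0 < lh w := by
  cases w with
  | nil => simp [inF] at hw
  | cons b w => simp [lh]

lemma Nat.mul_div_sub_one_le_div_sub_one {q n n' L : ℕ} (h : q * n ≤ n') :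
    q * (n / L - 1) ≤ n' / L - 1 := by
  have hdiv : q * (n / L) ≤ n' / L :=
    (Nat.mul_div_le_mul_div_assoc q n L).trans (Nat.div_le_div_right h)
  rcases Nat.eq_zero_or_pos q with rfl | hq
  · simp
  · rw [Nat.mul_sub_one]
    omega

lemma mul_div_le_div_of_mul_le {α : Type*} [Field α] [LinearOrder α] [IsStrictOrderedRing α]
    {q z d d' : α} (hq : 0 ≤ q) (hz : 0 ≤ z) (hd : 0 < d) (h : q * d ≤ d') :
    q * z / d' ≤ z / d := by
  rcases hq.eq_or_lt with rfl | hq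
  · simpa using div_nonneg hz hd.le
  calc q * z / d' ≤ q * z / (q * d) := div_le_div_of_nonneg_left (by positivity) (by positivity) h
    _ = z / d := mul_div_mul_left z d hq.ne'

theorem stmt11_general (u : Word) (hu : inF u) (v : ℕ → Word)
    (hchain : ∀ m, BuiltFrom (v (m + 1)) (v m)) :
    ∀ m, 4 * lh u ≤ lh (v m) →
      (Zc (v (m + 1)) : ℝ) / ((lh (v (m + 1)) / lh u - 1 : ℕ) : ℝ)
        ≤ (Zc (v m) : ℝ) / ((lh (v m) / lh u - 1 : ℕ) : ℝ) := by
  intro m hm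
  obtain ⟨q, hZ, hlh⟩ := (hchain m).exists_Zc_eq_mul
  have hden : 0 < lh (v m) / lh u - 1 := by
    have : 4 ≤ lh (v m) / lh u := (Nat.le_div_iff_mul_le hu.lh_pos).2 (by linarith)
    omega
  rw [hZ, Nat.cast_mul]
  exact mul_div_le_div_of_mul_le (Nat.cast_nonneg _) (Nat.cast_nonneg _)
    (by exact_mod_cast hden) (by exact_mod_cast Nat.mul_div_sub_one_le_div_sub_one hlh)

theorem stmt11 (u : Word) (hu : inF u) (v : ℕ → Word) (hF : ∀ m, inF (v m))
    (hchain : ∀ m, BuiltFrom (v (m + 1)) (v m)) :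
    ∀ m, 4 * lh u ≤ lh (v m) →
      (Zc (v (m + 1)) : ℝ) / ((lh (v (m + 1)) / lh u - 1 : ℕ) : ℝ)
        ≤ (Zc (v m) : ℝ) / ((lh (v m) / lh u - 1 : ℕ) : ℝ) :=
  stmt11_general u hu v hchain
end
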